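/- Let D = {(0, +1, −1)} be the singleton set consisting of the pattern 0+−. Then cap(D) = log₂((√5 + 1)/2), the base-2 logarithm of the golden ratio. -/

import Mathlib

/-- The integer value of a binary symbol. -/
def boolToInt (b : Bool) : ℤ := if b then 1 else 0

/-- Componentwise difference of two binary words, a word over `{-1, 0, +1}`. -/
def diffWord (u v : List Bool) : List ℤ :=
  List.zipWith (fun a b => boolToInt a - boolToInt b) u v

/-- A forbidden pattern: a nonempty finite word over the alphabet `{-1, 0, +1}`. -/
def IsPattern (p : List ℤ) : Prop :=
  p ≠ [] ∧ ∀ x ∈ p, x = -1 ∨ x = 0 ∨ x = 1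

/-- A code `C` of binary words avoids the forbidden set `D` if no difference of two
distinct code words contains a pattern of `D` as a contiguous subword (factor). -/
def AvoidsCode (D : Finset (List ℤ)) (C : Finset (List Bool)) : Prop :=
  ∀ u ∈ C, ∀ v ∈ C, u ≠ v → ∀ p ∈ D, ¬ p <:+: diffWord u v

/-- `delta D n` : the maximal cardinality of a code of binary words of length `n`
avoiding the forbidden set `D`. -/
noncomputable def delta (D : Finset (List ℤ)) (n : ℕ) : ℕ :=
  sSup {k : ℕ | ∃ C : Finset (List Bool),
    (∀ u ∈ C, u.length = n) ∧ AvoidsCode D C ∧ C.card = k}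

/-- The capacity of a set of forbidden difference patterns. -/
noncomputable def cap (D : Finset (List ℤ)) : ℝ :=
  Filter.limsup (fun n : ℕ => Real.logb 2 (delta D n) / n) Filter.atTop

/-! If a code avoiding `0+-` contains `w10` and `w01` for a nonempty word `w`, the difference of
these two words ends with `0, +1, -1`. Hence, in a code of length `n + 3`, no word `w` has both
`w0` and `w1` among the prefixes that extend to the code in two ways; counting prefixes gives
`δ (n + 3) ≤ δ (n + 2) + δ (n + 1)`, whence `δ n ≤ 2 F (n + 1)`. Conversely, concatenating the
pairs `00`, `10`, `11` so that `11` is never followed by `00` puts every factor `10` at an even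
and every factor `01` at an odd position; so no difference of two such words contains `+1, -1`,
and there are `F (2m + 2)` of them of length `2m`. Both bounds are `φ ^ n` up to a factor `2`. -/

open Finset Real Filter Topology
open scoped goldenRatio

noncomputable def snocPreimage (C : Finset (List Bool)) (b : Bool) : Finset (List Bool) :=
  C.preimage (· ++ [b]) (List.append_left_injective [b]).injOn

@[simp]
lemma mem_snocPreimage {C : Finset (List Bool)} {b : Bool} {w : List Bool} :
    w ∈ snocPreimage C b ↔ w ++ [b] ∈ C :=
  Finset.mem_preimage

noncomputable def truncation (C : Finset (List Bool)) : Finset (List Bool) :=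
  snocPreimage C false ∪ snocPreimage C true

noncomputable def branching (C : Finset (List Bool)) : Finset (List Bool) :=
  snocPreimage C false ∩ snocPreimage C true

section Truncation

variable {C : Finset (List Bool)} {n : ℕ}

lemma length_of_mem_snocPreimage (hC : ∀ u ∈ C, u.length = n + 1) {b : Bool} {w : List Bool}
    (hw : w ∈ snocPreimage C b) : w.length = n := by
  simpa using hC _ (mem_snocPreimage.1 hw)

lemma length_of_mem_truncation (hC : ∀ u ∈ C, u.length = n + 1) {w : List Bool}
    (hw : w ∈ truncation C) : w.length = n := by
  rcases Finset.mem_union.1 hw with hw | hw <;> exact length_of_mem_snocPreimage hC hw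

lemma card_le_card_snocPreimage_add (hC : ∀ u ∈ C, u ≠ []) :
    #C ≤ #(snocPreimage C false) + #(snocPreimage C true) := by
  have hsub : C ⊆ (snocPreimage C false).image (· ++ [false]) ∪
      (snocPreimage C true).image (· ++ [true]) := by
    intro u hu
    obtain ⟨w, b, rfl⟩ : ∃ w b, u = w ++ [b] :=
      ⟨_, _, (List.dropLast_append_getLast (hC u hu)).symm⟩
    cases b <;> simp [hu]
  exact (card_le_card hsub).trans ((card_union_le _ _).trans
    (Nat.add_le_add card_image_le card_image_le))

lemma card_le_card_truncation_add_card_branching (hC : ∀ u ∈ C, u ≠ []) :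
    #C ≤ #(truncation C) + #(branching C) :=
  (card_le_card_snocPreimage_add hC).trans (card_union_add_card_inter _ _).ge

lemma card_le_two_pow : ∀ {n : ℕ} {C : Finset (List Bool)}, (∀ u ∈ C, u.length = n) →
    #C ≤ 2 ^ n
  | 0, C, hC => by
    have : C ⊆ {[]} := fun u hu => by simpa using hC u hu
    simpa using card_le_card this
  | n + 1, C, hC => by
    have hne : ∀ u ∈ C, u ≠ [] := fun u hu h => by simpa [h] using hC u hu
    have hle (b : Bool) : #(snocPreimage C b) ≤ 2 ^ n :=
      card_le_two_pow fun _ hw => length_of_mem_snocPreimage hC hw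
    calc #C ≤ #(snocPreimage C false) + #(snocPreimage C true) := card_le_card_snocPreimage_add hne
      _ ≤ 2 ^ n + 2 ^ n := Nat.add_le_add (hle false) (hle true)
      _ = 2 ^ (n + 1) := by ring

end Truncation

lemma diffWord_append {u v a b : List Bool} (h : u.length = v.length) :
    diffWord (u ++ a) (v ++ b) = diffWord u v ++ diffWord a b :=
  List.zipWith_append h

lemma diffWord_self (w : List Bool) : diffWord w w = List.replicate w.length 0 := by
  induction w <;> simp_all [diffWord, List.replicate_succ]

lemma diffWord_cons (a b : Bool) (u v : List Bool) :
    diffWord (a :: u) (b :: v) = (boolToInt a - boolToInt b) :: diffWord u v :=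
  rfl

section Avoidance

variable {D : Finset (List ℤ)} {C : Finset (List Bool)} {n : ℕ}

lemma AvoidsCode.mono {C' : Finset (List Bool)} (hC : AvoidsCode D C) (h : C' ⊆ C) :
    AvoidsCode D C' :=
  fun u hu v hv => hC u (h hu) v (h hv)

lemma AvoidsCode.of_append_mem {C' : Finset (List Bool)} (hC : AvoidsCode D C)
    (hlen : ∀ u ∈ C', u.length = n) (hext : ∀ u ∈ C', ∃ e, u ++ e ∈ C) : AvoidsCode D C' := by
  intro u hu v hv huv p hp hinf
  obtain ⟨e, he⟩ := hext u hu
  obtain ⟨e', he'⟩ := hext v hv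
  have hl : u.length = v.length := (hlen u hu).trans (hlen v hv).symm
  refine hC _ he _ he' (fun h => huv (List.append_inj h hl).1) p hp ?_
  rw [diffWord_append hl]
  exact hinf.trans (List.prefix_append _ _).isInfix

lemma AvoidsCode.truncation (hC : AvoidsCode D C) (hlen : ∀ u ∈ C, u.length = n + 1) :
    AvoidsCode D (truncation C) :=
  hC.of_append_mem (fun _ => length_of_mem_truncation hlen) fun u hu => by
    rcases Finset.mem_union.1 hu with hu | hu <;> exact ⟨_, mem_snocPreimage.1 hu⟩

lemma AvoidsCode.branching (hC : AvoidsCode D C) (hlen : ∀ u ∈ C, u.length = n + 1) :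
    AvoidsCode D (branching C) :=
  (hC.truncation hlen).mono inter_subset_union

lemma card_le_delta (hlen : ∀ u ∈ C, u.length = n) (hC : AvoidsCode D C) : #C ≤ delta D n :=
  le_csSup ⟨2 ^ n, by rintro k ⟨C, hl, -, rfl⟩; exact card_le_two_pow hl⟩ ⟨C, hlen, hC, rfl⟩

lemma delta_le {M : ℕ}
    (h : ∀ C : Finset (List Bool), (∀ u ∈ C, u.length = n) → AvoidsCode D C → #C ≤ M) :
    delta D n ≤ M :=
  csSup_le ⟨0, ∅, by simp, by simp [AvoidsCode], rfl⟩ <| by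
    rintro k ⟨C, hl, hC, rfl⟩
    exact h C hl hC

lemma delta_le_two_pow (D : Finset (List ℤ)) (n : ℕ) : delta D n ≤ 2 ^ n :=
  delta_le fun _ hlen _ => card_le_two_pow hlen

end Avoidance

lemma branching_branching_eq_empty {C : Finset (List Bool)} {n : ℕ}
    (hlen : ∀ u ∈ C, u.length = n + 3) (hC : AvoidsCode {[0, 1, -1]} C) :
    branching (branching C) = ∅ := by
  refine eq_empty_of_forall_notMem fun w hw => ?_
  simp only [branching, mem_inter, mem_snocPreimage, List.append_assoc, List.cons_append,
    List.nil_append] at hw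
  have hw_len : w.length = n + 1 := by simpa using hlen _ hw.1.1
  refine hC _ hw.2.1 _ hw.1.2 (by simp) _ (mem_singleton_self _) ?_
  rw [diffWord_append rfl, diffWord_self, hw_len, List.replicate_succ']
  exact ⟨List.replicate n 0, [], by simp [diffWord, boolToInt]⟩

lemma delta_add_three_le (n : ℕ) :
    delta {[0, 1, -1]} (n + 3) ≤ delta {[0, 1, -1]} (n + 2) + delta {[0, 1, -1]} (n + 1) := by
  refine delta_le fun C hlen hC => ?_
  have hne : ∀ u ∈ C, u ≠ [] := fun u hu => List.ne_nil_of_length_eq_add_one (hlen u hu)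
  have hBlen : ∀ u ∈ branching C, u.length = n + 2 :=
    fun u hu => length_of_mem_truncation hlen (inter_subset_union hu)
  have hBne : ∀ u ∈ branching C, u ≠ [] :=
    fun u hu => List.ne_nil_of_length_eq_add_one (hBlen u hu)
  calc #C ≤ #(truncation C) + #(branching C) := card_le_card_truncation_add_card_branching hne
    _ ≤ #(truncation C) + (#(truncation (branching C)) + #(branching (branching C))) :=
        Nat.add_le_add_left (card_le_card_truncation_add_card_branching hBne) _
    _ ≤ delta {[0, 1, -1]} (n + 2) + delta {[0, 1, -1]} (n + 1) := by
        rw [branching_branching_eq_empty hlen hC, card_empty, add_zero]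
        gcongr
        · exact card_le_delta (fun _ => length_of_mem_truncation hlen) (hC.truncation hlen)
        · exact card_le_delta (fun _ => length_of_mem_truncation hBlen)
            ((hC.branching hlen).truncation hBlen)

lemma delta_le_two_mul_fib : ∀ n : ℕ, delta {[0, 1, -1]} n ≤ 2 * Nat.fib (n + 1)
  | 0 | 1 | 2 => (delta_le_two_pow _ _).trans (by norm_num)
  | n + 3 => by
    have h₂ : delta {[0, 1, -1]} (n + 2) ≤ 2 * Nat.fib (n + 3) := delta_le_two_mul_fib (n + 2)
    have h₁ : delta {[0, 1, -1]} (n + 1) ≤ 2 * Nat.fib (n + 2) := delta_le_two_mul_fib (n + 1)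
    have h₃ : Nat.fib (n + 4) = Nat.fib (n + 2) + Nat.fib (n + 3) := Nat.fib_add_two
    have := delta_add_three_le n
    change _ ≤ 2 * Nat.fib (n + 4)
    omega

/-- Words of `m` pairs `00`, `10`, `11` with no `11` followed by `00`; the flag says whether the
first pair may be `00`. -/
def pairCode : ℕ → Bool → Finset (List Bool)
  | 0, _ => {[]}
  | m + 1, zeroFirst =>
      (pairCode m true).image (true :: false :: ·) ∪ (pairCode m false).image (true :: true :: ·) ∪
        if zeroFirst then (pairCode m true).image (false :: false :: ·) else ∅

lemma mem_pairCode_succ {m : ℕ} {b : Bool} {u : List Bool} :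
    u ∈ pairCode (m + 1) b ↔ (∃ w ∈ pairCode m true, u = true :: false :: w) ∨
      (∃ w ∈ pairCode m false, u = true :: true :: w) ∨
      (b = true ∧ ∃ w ∈ pairCode m true, u = false :: false :: w) := by
  cases b <;> simp [pairCode, eq_comm]

lemma length_of_mem_pairCode : ∀ {m : ℕ} {b : Bool} {u : List Bool}, u ∈ pairCode m b →
    u.length = 2 * m
  | 0, _, _, hu => by simp_all [pairCode]
  | m + 1, _, _, hu => by
    rcases mem_pairCode_succ.1 hu with ⟨w, hw, rfl⟩ | ⟨w, hw, rfl⟩ | ⟨-, w, hw, rfl⟩ <;>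
      simp [length_of_mem_pairCode hw, Nat.mul_succ]

lemma card_pairCode_succ (m : ℕ) :
    #(pairCode (m + 1) true) = #(pairCode m true) + #(pairCode m false) + #(pairCode m true) ∧
      #(pairCode (m + 1) false) = #(pairCode m true) + #(pairCode m false) := by
  have hinj (a b : Bool) : Function.Injective (a :: b :: · : List Bool → List Bool) :=
    fun _ _ h => by simpa using h
  simp [pairCode, card_union_of_disjoint, disjoint_left, card_image_of_injective _ (hinj _ _),
    add_assoc]

lemma card_pairCode : ∀ m : ℕ,
    #(pairCode m true) = Nat.fib (2 * m + 2) ∧ #(pairCode m false) = Nat.fib (2 * m + 1)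
  | 0 => by simp [pairCode]
  | m + 1 => by
    obtain ⟨ih_true, ih_false⟩ := card_pairCode m
    have h₃ : Nat.fib (2 * m + 3) = Nat.fib (2 * m + 1) + Nat.fib (2 * m + 2) := Nat.fib_add_two
    have h₄ : Nat.fib (2 * m + 4) = Nat.fib (2 * m + 2) + Nat.fib (2 * m + 3) := Nat.fib_add_two
    rw [(card_pairCode_succ m).1, (card_pairCode_succ m).2, ih_true, ih_false,
      show 2 * (m + 1) + 2 = 2 * m + 4 by ring, show 2 * (m + 1) + 1 = 2 * m + 3 by ring]
    omega

/-- `z` stands for the entry of the difference just before `u` and `v`: it may be `+1` only when `u`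
cannot start with `0`. -/
lemma isChain_cons_diffWord_pairCode : ∀ {m : ℕ} {b b' : Bool} {u v : List Bool} {z : ℤ},
    u ∈ pairCode m b → v ∈ pairCode m b' → (z = 1 → b = false) →
    List.IsChain (fun x y : ℤ => ¬(x = 1 ∧ y = -1)) (z :: diffWord u v)
  | 0, _, _, _, _, _, hu, hv, _ => by simp_all [pairCode, diffWord]
  | m + 1, _, _, _, _, _, hu, hv, hz => by
    rcases mem_pairCode_succ.1 hu with ⟨u, hu', rfl⟩ | ⟨u, hu', rfl⟩ | ⟨hb, u, hu', rfl⟩ <;>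
    rcases mem_pairCode_succ.1 hv with ⟨v, hv', rfl⟩ | ⟨v, hv', rfl⟩ | ⟨-, v, hv', rfl⟩ <;>
    refine List.isChain_cons_cons.2 ⟨?_, List.isChain_cons_cons.2
      ⟨?_, isChain_cons_diffWord_pairCode hu' hv' ?_⟩⟩ <;>
    simp_all [boolToInt]

lemma not_infix_diffWord_pairCode {m : ℕ} {b b' : Bool} {u v : List Bool}
    (hu : u ∈ pairCode m b) (hv : v ∈ pairCode m b') : ¬ [1, -1] <:+: diffWord u v := fun h => by
  simpa using ((isChain_cons_diffWord_pairCode (z := 0) hu hv (by simp)).tail).infix h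

lemma not_infix_diffWord_false_cons {u v : List Bool} (h : ¬ [1, -1] <:+: diffWord u v) :
    ¬ [1, -1] <:+: diffWord (false :: u) (false :: v) := by
  simp [diffWord_cons, List.infix_cons_iff, boolToInt, h]

lemma avoidsCode_of_not_infix {C : Finset (List Bool)}
    (h : ∀ u ∈ C, ∀ v ∈ C, ¬ [1, -1] <:+: diffWord u v) : AvoidsCode {[0, 1, -1]} C := by
  intro u hu v hv _ p hp hinf
  rw [mem_singleton] at hp
  subst hp
  exact h u hu v hv ((List.suffix_cons 0 [1, -1]).isInfix.trans hinf)

lemma fib_succ_le_delta (n : ℕ) : Nat.fib (n + 1) ≤ delta {[0, 1, -1]} n := by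
  obtain ⟨m, rfl | rfl⟩ := Nat.even_or_odd' n
  · calc Nat.fib (2 * m + 1) ≤ Nat.fib (2 * m + 2) := Nat.fib_mono (by omega)
      _ = #(pairCode m true) := (card_pairCode m).1.symm
      _ ≤ _ := card_le_delta (fun _ => length_of_mem_pairCode)
          (avoidsCode_of_not_infix fun _ hu _ hv => not_infix_diffWord_pairCode hu hv)
  · calc Nat.fib (2 * m + 1 + 1) = #((pairCode m true).image (false :: ·)) := by
          rw [card_image_of_injective _ List.cons_injective, (card_pairCode m).1]
      _ ≤ _ := by
        refine card_le_delta (by simpa using fun _ => length_of_mem_pairCode)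
          (avoidsCode_of_not_infix ?_)
        simp only [mem_image]
        rintro _ ⟨u, hu, rfl⟩ _ ⟨v, hv, rfl⟩
        exact not_infix_diffWord_false_cons (not_infix_diffWord_pairCode hu hv)

lemma fib_succ_le_goldenRatio_pow (n : ℕ) : (Nat.fib (n + 1) : ℝ) ≤ φ ^ n := by
  have h := fib_succ_sub_goldenConj_mul_fib n
  nlinarith [goldenConj_neg, (Nat.fib n).cast_nonneg (α := ℝ)]

lemma goldenRatio_pow_le_two_mul_fib_succ (n : ℕ) : φ ^ n ≤ 2 * Nat.fib (n + 1) := by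
  have h := goldenRatio_mul_fib_succ_add_fib n
  have hfib : (Nat.fib n : ℝ) ≤ Nat.fib (n + 1) := by exact_mod_cast Nat.fib_le_fib_succ
  have hφ : φ ^ n ≤ φ * Nat.fib (n + 1) := by
    refine le_of_mul_le_mul_left ?_ goldenRatio_pos
    rw [← pow_succ', ← h]
    nlinarith [goldenRatio_sq]
  nlinarith [goldenRatio_lt_two, (Nat.fib (n + 1)).cast_nonneg (α := ℝ)]

lemma tendsto_logb_mul_pow_div {K c : ℝ} (hK : 0 < K) (hc : 0 < c) :
    Tendsto (fun n : ℕ => logb 2 (K * c ^ n) / n) atTop (𝓝 (logb 2 c)) := by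
  have h : Tendsto (fun n : ℕ => logb 2 K / n + logb 2 c) atTop (𝓝 (0 + logb 2 c)) :=
    (tendsto_const_div_atTop_nhds_zero_nat _).add tendsto_const_nhds
  rw [zero_add] at h
  refine h.congr' ((eventually_ne_atTop 0).mono fun n hn => ?_)
  simp only [logb_mul hK.ne' (pow_pos hc n).ne', logb_pow]
  field_simp

lemma cap_eq_logb_of_bounds (D : Finset (List ℤ)) {K c : ℝ} (hK : 0 < K) (hc : 0 < c)
    (hlow : ∀ n, K⁻¹ * c ^ n ≤ delta D n) (hup : ∀ n, (delta D n : ℝ) ≤ K * c ^ n) :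
    cap D = logb 2 c := by
  have hpos (n : ℕ) : 0 < K⁻¹ * c ^ n := by positivity
  refine (tendsto_of_tendsto_of_tendsto_of_le_of_le
    (tendsto_logb_mul_pow_div (inv_pos.2 hK) hc) (tendsto_logb_mul_pow_div hK hc)
    (fun n => ?_) (fun n => ?_)).limsup_eq
  · exact div_le_div_of_nonneg_right
      (logb_le_logb_of_le one_lt_two (hpos n) (hlow n)) n.cast_nonneg
  · exact div_le_div_of_nonneg_right
      (logb_le_logb_of_le one_lt_two ((hpos n).trans_le (hlow n)) (hup n)) n.cast_nonneg

/-- `cap({0+-}) = log₂((√5 + 1)/2)`. -/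
theorem capacity_zero_plus_minus :
    cap {[(0:ℤ), 1, -1]} = Real.logb 2 ((Real.sqrt 5 + 1) / 2) := by
  rw [show (√5 + 1) / 2 = φ by rw [add_comm]]
  refine cap_eq_logb_of_bounds _ two_pos goldenRatio_pos (fun n => ?_) (fun n => ?_)
  · calc 2⁻¹ * φ ^ n ≤ Nat.fib (n + 1) := by linarith [goldenRatio_pow_le_two_mul_fib_succ n]
      _ ≤ delta _ n := by exact_mod_cast fib_succ_le_delta n
  · calc (delta _ n : ℝ) ≤ (2 * Nat.fib (n + 1) : ℕ) := by exact_mod_cast delta_le_two_mul_fib n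
      _ ≤ 2 * φ ^ n := by push_cast; linarith [fib_succ_le_goldenRatio_pow n]
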